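/- Let N ≥ 3, n ≥ 2, let Ω ⊆ ℝ^N be an open set, and let a₁, …, a_n ∈ Ω be pairwise distinct points. Then for every u ∈ C_c^1(Ω \ {a₁, …, a_n}): ∫_Ω |∇u|² dx − ((N − 2)²/n²) ∫_Ω V u² dx = ∫_Ω |∇( u ∏_{i=1}^n |x − a_i|^{(N−2)/n} )|² ∏_{i=1}^n |x − a_i|^{−2(N−2)/n} dx, and in particular the left-hand side is nonnegative, and strictly positive for u ≢ 0. -/

import Mathlib

/-!
Ground-state substitution. Put `α = (N - 2) / n`, `E = ∏ i, |x - a i| ^ α` and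
`G = ∑ i, (x - a i) / |x - a i| ^ 2 = ∇ log ∏ i, |x - a i|`, so that `∇(u E) = E (∇u + α u G)`.
Expanding the square, `|∇(u E)|² E⁻² = |∇u|² + α ⟪∇(u²), G⟫ + α² u² |G|²`. Since
`div G = (N - 2) ∑ i, |x - a i|⁻²`, the middle term is
`α div (u² G) - α (N - 2) u² ∑ i, |x - a i|⁻²`, whose first part integrates to zero.
Finally, `|a i - a j|² / (|x - a i|² |x - a j|²)` is the squared distance between the images of
`a i` and `a j` under the inversion about `x`, and Lagrange's identity
`∑_{i<j} |d i - d j|² = n ∑ |d i|² - |∑ d i|²` gives `V = n ∑ i, |x - a i|⁻² - |G|²`; with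
`α n = N - 2` the three terms combine to `|∇u|² - α² V u²`.
If the right-hand side vanishes then `∇(u E) = 0`, and `u E`, having compact support, is zero.
-/

open MeasureTheory

noncomputable def mpV {N n : ℕ} (a : Fin n → EuclideanSpace ℝ (Fin N))
    (x : EuclideanSpace ℝ (Fin N)) : ℝ :=
  ∑ p ∈ Finset.univ.filter (fun p : Fin n × Fin n => p.1 < p.2),
    ‖a p.1 - a p.2‖ ^ 2 / (‖x - a p.1‖ ^ 2 * ‖x - a p.2‖ ^ 2)

open InnerProductSpace Real Filter Topology Finset Module

theorem Finset.two_nsmul_sum_filter_fst_lt {ι M : Type*} [Fintype ι] [LinearOrder ι]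
    [AddCommMonoid M] (f : ι → ι → M) (hsymm : ∀ i j, f i j = f j i) (hdiag : ∀ i, f i i = 0) :
    2 • ∑ p ∈ univ.filter (fun p : ι × ι => p.1 < p.2), f p.1 p.2 = ∑ i, ∑ j, f i j := by
  have hsplit : ∀ i j, f i j = (if i < j then f i j else 0) + (if j < i then f j i else 0) := by
    intro i j
    rcases lt_trichotomy i j with h | rfl | h
    · simp [h, h.not_gt]
    · simp [hdiag]
    · simp [h, h.not_gt, hsymm i j]
  rw [sum_congr rfl fun i _ => sum_congr rfl fun j _ => hsplit i j]
  simp only [sum_add_distrib]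
  rw [sum_comm (f := fun i j => if j < i then f j i else 0), ← two_nsmul, sum_filter,
    Fintype.sum_prod_type]

theorem prod_rpow_neg_two_mul {ι : Type*} [Fintype ι] {r : ι → ℝ} (hr : ∀ i, 0 ≤ r i) (α : ℝ) :
    ∏ i, r i ^ (-(2 * α)) = ((∏ i, r i ^ α) ^ 2)⁻¹ := by
  rw [← prod_pow, ← prod_inv_distrib]
  refine prod_congr rfl fun i _ => ?_
  rw [rpow_neg (hr i), mul_comm, rpow_mul (hr i), rpow_two]

theorem prod_norm_sub_rpow_pos {E ι : Type*} [NormedAddCommGroup E] [Fintype ι] {a : ι → E}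
    {x : E} (hx : x ∉ Set.range a) (α : ℝ) : 0 < ∏ i, ‖x - a i‖ ^ α :=
  prod_pos fun i _ => rpow_pos_of_pos (norm_pos_iff.2 (sub_ne_zero.2 fun h => hx ⟨i, h.symm⟩)) α

theorem tsupport_sq_subset {X : Type*} [TopologicalSpace X] (u : X → ℝ) :
    tsupport (fun y => u y ^ 2) ⊆ tsupport u :=
  tsupport_comp_subset (g := fun t : ℝ => t ^ 2) (by simp) u

theorem ContDiff.smul_of_tsupport_subset {𝕜 E G : Type*} [NontriviallyNormedField 𝕜]
    [NormedAddCommGroup E] [NormedSpace 𝕜 E] [NormedAddCommGroup G] [NormedSpace 𝕜 G]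
    {k : WithTop ℕ∞} {f : E → 𝕜} {g : E → G} {U : Set E} (hf : ContDiff 𝕜 k f)
    (hg : ContDiffOn 𝕜 k g U) (hU : IsOpen U) (hfU : tsupport f ⊆ U) :
    ContDiff 𝕜 k fun x => f x • g x := by
  refine contDiff_iff_contDiffAt.2 fun x => ?_
  by_cases hx : x ∈ tsupport f
  · exact hf.contDiffAt.smul (hg.contDiffAt (hU.mem_nhds (hfU hx)))
  · refine (contDiffAt_const (c := 0)).congr_of_eventuallyEq ?_
    filter_upwards [notMem_tsupport_iff_eventuallyEq.1 hx] with y hy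
    simp [hy]

theorem HasCompactSupport.eq_zero_of_fderiv_eq_zero {E G : Type*} [NormedAddCommGroup E]
    [NormedSpace ℝ E] [NoncompactSpace E] [NormedAddCommGroup G] [NormedSpace ℝ G] {f : E → G}
    (hc : HasCompactSupport f) (hf : Differentiable ℝ f) (hf' : ∀ x, fderiv ℝ f x = 0) :
    f = 0 := by
  obtain ⟨x₀, hx₀⟩ := (Set.ne_univ_iff_exists_notMem _).1 hc.ne_univ
  ext x
  rw [is_const_of_fderiv_eq_zero hf hf' x x₀, image_eq_zero_of_notMem_tsupport hx₀, Pi.zero_apply]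

variable {F : Type*} [NormedAddCommGroup F] [InnerProductSpace ℝ F]

theorem sum_filter_fst_lt_norm_sub_sq {ι : Type*} [Fintype ι] [LinearOrder ι] (d : ι → F) :
    ∑ p ∈ univ.filter (fun p : ι × ι => p.1 < p.2), ‖d p.1 - d p.2‖ ^ 2
      = Fintype.card ι * ∑ i, ‖d i‖ ^ 2 - ‖∑ i, d i‖ ^ 2 := by
  have hpairs := two_nsmul_sum_filter_fst_lt (fun i j => ‖d i - d j‖ ^ 2)
    (fun i j => by rw [norm_sub_rev]) (fun i => by simp)
  have hinner : ∑ i, ∑ j, ⟪d i, d j⟫_ℝ = ‖∑ i, d i‖ ^ 2 := by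
    simp_rw [← real_inner_self_eq_norm_sq, sum_inner, inner_sum]
  have hexpand : ∑ i, ∑ j, ‖d i - d j‖ ^ 2
      = 2 * (Fintype.card ι * ∑ i, ‖d i‖ ^ 2 - ‖∑ i, d i‖ ^ 2) := by
    simp_rw [norm_sub_sq_real, sum_add_distrib, sum_sub_distrib, ← mul_sum, hinner,
      sum_const, card_univ, nsmul_eq_mul, ← mul_sum]
    ring
  rw [hexpand, two_nsmul, ← two_mul] at hpairs
  linarith

theorem norm_inv_sq_smul_sub_sq {x a b : F} (ha : x ≠ a) (hb : x ≠ b) :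
    ‖(‖x - a‖ ^ 2)⁻¹ • (x - a) - (‖x - b‖ ^ 2)⁻¹ • (x - b)‖ ^ 2
      = ‖a - b‖ ^ 2 / (‖x - a‖ ^ 2 * ‖x - b‖ ^ 2) := by
  have h := dist_div_norm_sq_smul (sub_ne_zero.2 ha) (sub_ne_zero.2 hb) 1
  simp only [one_div, inv_pow, one_pow, dist_eq_norm, sub_sub_sub_cancel_left] at h
  rw [h, norm_sub_rev b a]
  field_simp

section Gradient
variable [CompleteSpace F] {x : F}

theorem gradient_of_notMem_tsupport {f : F → ℝ} (hx : x ∉ tsupport f) : gradient f x = 0 := by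
  simp [gradient, fderiv_of_notMem_tsupport ℝ hx]

theorem ContDiff.continuous_gradient {f : F → ℝ} (hf : ContDiff ℝ 1 f) :
    Continuous (gradient f) :=
  (toDual ℝ F).symm.continuous.comp (hf.continuous_fderiv one_ne_zero)

theorem HasGradientAt.mul {f g : F → ℝ} {f' g' : F} (hf : HasGradientAt f f' x)
    (hg : HasGradientAt g g' x) : HasGradientAt (fun y => f y * g y) (f x • g' + g x • f') x := by
  rw [hasGradientAt_iff_hasFDerivAt] at *
  refine (hf.mul hg).congr_fderiv ?_
  ext v
  simp

theorem hasGradientAt_log_norm_sub {c : F} (hx : x ≠ c) :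
    HasGradientAt (fun y => log ‖y - c‖) ((‖x - c‖ ^ 2)⁻¹ • (x - c)) x := by
  have hq : ‖x - c‖ ^ 2 ≠ 0 := by simpa [sub_eq_zero] using hx
  have h := (((hasFDerivAt_id x).sub_const c).norm_sq.log hq).const_mul (1 / 2 : ℝ)
  have hfun : (fun y => log ‖y - c‖) = fun y => 1 / 2 * log (‖id y - c‖ ^ 2) := by
    ext y
    simp [Real.log_pow]
  rw [hfun, hasGradientAt_iff_hasFDerivAt]
  refine h.congr_fderiv ?_
  ext v
  simp
  ring

end Gradient

section Multipole
variable {ι : Type*} [Fintype ι] {a : ι → F} {x : F}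

noncomputable def multipoleField (a : ι → F) (x : F) : F :=
  ∑ i, (‖x - a i‖ ^ 2)⁻¹ • (x - a i)

theorem contDiffOn_multipoleField (a : ι → F) {k : WithTop ℕ∞} :
    ContDiffOn ℝ k (multipoleField a) (Set.range a)ᶜ := by
  intro x hx
  refine (ContDiffAt.sum fun i _ => ?_).contDiffWithinAt
  have hq : ‖x - a i‖ ^ 2 ≠ 0 := by simpa [sub_eq_zero] using fun h => hx ⟨i, h.symm⟩
  have hsub : ContDiff ℝ k fun y : F => y - a i := contDiff_id.sub contDiff_const
  exact (((contDiff_norm_sq ℝ).comp hsub).contDiffAt.inv hq).smul hsub.contDiffAt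

theorem contDiffOn_prod_norm_sub_rpow (a : ι → F) (α : ℝ) {k : WithTop ℕ∞} :
    ContDiffOn ℝ k (fun y => ∏ i, ‖y - a i‖ ^ α) (Set.range a)ᶜ := by
  intro x hx
  refine (contDiffAt_prod fun i _ => ?_).contDiffWithinAt
  have hne : x - a i ≠ 0 := sub_ne_zero.2 fun h => hx ⟨i, h.symm⟩
  exact ((contDiffAt_norm ℝ hne).comp x (contDiffAt_id.sub contDiffAt_const)).rpow_const_of_ne
    (norm_ne_zero_iff.2 hne)

theorem hasGradientAt_prod_norm_sub_rpow [CompleteSpace F] (α : ℝ) (hx : x ∉ Set.range a) :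
    HasGradientAt (fun y => ∏ i, ‖y - a i‖ ^ α)
      ((α * ∏ i, ‖x - a i‖ ^ α) • multipoleField a x) x := by
  have hexp : (fun y => ∏ i, ‖y - a i‖ ^ α) =ᶠ[𝓝 x] fun y => exp (α * ∑ i, log ‖y - a i‖) := by
    filter_upwards [(Set.finite_range a).isClosed.isOpen_compl.mem_nhds hx] with y hy
    rw [mul_sum, exp_sum]
    refine prod_congr rfl fun i _ => ?_
    rw [rpow_def_of_pos (norm_pos_iff.2 (sub_ne_zero.2 fun h => hy ⟨i, h.symm⟩)), mul_comm]
  have hlog : HasFDerivAt (fun y => α * ∑ i, log ‖y - a i‖)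
      (α • ∑ i, toDual ℝ F ((‖x - a i‖ ^ 2)⁻¹ • (x - a i))) x :=
    (HasFDerivAt.fun_sum fun i _ => (hasGradientAt_log_norm_sub
      fun h => hx ⟨i, h.symm⟩).hasFDerivAt).const_mul α
  rw [hasGradientAt_iff_hasFDerivAt]
  refine (hlog.exp.congr_of_eventuallyEq hexp).congr_fderiv ?_
  rw [hexp.eq_of_nhds]
  ext v
  simp [multipoleField, mul_sum]
  exact sum_congr rfl fun i _ => by ring

end Multipole

section Divergence
variable {x : F}

/-- `tr (DW x)`, with the junk value `0` wherever `W` is not differentiable. -/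
noncomputable def divergence (W : F → F) (x : F) : ℝ :=
  LinearMap.trace ℝ F (fderiv ℝ W x)

theorem HasFDerivAt.divergence_eq {W : F → F} {W' : F →L[ℝ] F} (h : HasFDerivAt W W' x) :
    divergence W x = LinearMap.trace ℝ F W' := by
  rw [divergence, h.fderiv]

theorem divergence_eq_sum_inner {W : F → F} {ι : Type*} [Fintype ι] (b : OrthonormalBasis ι ℝ F)
    (x : F) : divergence W x = ∑ i, ⟪b i, fderiv ℝ W x (b i)⟫_ℝ :=
  LinearMap.trace_eq_sum_inner _ b

theorem HasCompactSupport.divergence {W : F → F} (hW : HasCompactSupport W) :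
    HasCompactSupport (divergence W) :=
  hW.mono' fun x hx => support_fderiv_subset ℝ fun h => hx (by simp [_root_.divergence, h])

variable [FiniteDimensional ℝ F]

theorem HasFDerivAt.divergence_smul {f : F → ℝ} {f' : F →L[ℝ] ℝ} {W : F → F} {W' : F →L[ℝ] F}
    (hf : HasFDerivAt f f' x) (hW : HasFDerivAt W W' x) :
    divergence (fun y => f y • W y) x = f x * LinearMap.trace ℝ F W' + f' (W x) := by
  rw [(hf.fun_smul hW).divergence_eq]
  simp

theorem exists_hasFDerivAt_inv_norm_sub_sq_smul {c : F} (hx : x ≠ c) :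
    ∃ L : F →L[ℝ] F, HasFDerivAt (fun y => (‖y - c‖ ^ 2)⁻¹ • (y - c)) L x ∧
      LinearMap.trace ℝ F L = (finrank ℝ F - 2) * (‖x - c‖ ^ 2)⁻¹ := by
  have hq : ‖x - c‖ ^ 2 ≠ 0 := by simpa [sub_eq_zero] using hx
  have hsub : HasFDerivAt (fun y : F => y - c) (ContinuousLinearMap.id ℝ F) x :=
    (hasFDerivAt_id x).sub_const c
  have hinv := (hasDerivAt_inv hq).comp_hasFDerivAt x hsub.norm_sq
  refine ⟨_, hinv.fun_smul hsub, ?_⟩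
  simp only [ContinuousLinearMap.toLinearMap_add, ContinuousLinearMap.toLinearMap_smul, map_add,
    map_smul, ContinuousLinearMap.coe_id, LinearMap.trace_id, ContinuousLinearMap.coe_smulRight,
    LinearMap.trace_smulRight, Function.comp_apply, smul_eq_mul, LinearMap.smul_apply,
    ContinuousLinearMap.coe_coe, ContinuousLinearMap.comp_apply, ContinuousLinearMap.id_apply,
    innerSL_apply_apply, real_inner_self_eq_norm_sq, nsmul_eq_mul]
  field_simp
  ring

theorem divergence_multipoleField {ι : Type*} [Fintype ι] {a : ι → F} (hx : x ∉ Set.range a) :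
    divergence (multipoleField a) x = (finrank ℝ F - 2) * ∑ i, (‖x - a i‖ ^ 2)⁻¹ := by
  choose L hL htr using fun i => exists_hasFDerivAt_inv_norm_sub_sq_smul (c := a i)
    fun h => hx ⟨i, h.symm⟩
  have hfield : HasFDerivAt (multipoleField a) (∑ i, L i) x := HasFDerivAt.fun_sum fun i _ => hL i
  simp [hfield.divergence_eq, htr, mul_sum]

variable {W : F → F}

theorem ContDiff.continuous_divergence (hW : ContDiff ℝ 1 W) : Continuous (divergence W) := by
  simp_rw [funext (divergence_eq_sum_inner (stdOrthonormalBasis ℝ F))]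
  exact continuous_finsetSum _ fun i _ =>
    continuous_const.inner ((hW.continuous_fderiv one_ne_zero).clm_apply continuous_const)

theorem integral_divergence_eq_zero [MeasurableSpace F] [BorelSpace F] (μ : Measure F)
    [μ.IsAddHaarMeasure] (hW : ContDiff ℝ 1 W) (hc : HasCompactSupport W) :
    ∫ x, divergence W x ∂μ = 0 := by
  set b := stdOrthonormalBasis ℝ F
  have hint : ∀ i, Integrable (fun x => ⟪b i, fderiv ℝ W x (b i)⟫_ℝ) μ := fun i =>
    (continuous_const.inner ((hW.continuous_fderiv one_ne_zero).clm_apply continuous_const)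
      ).integrable_of_hasCompactSupport
      ((hc.fderiv_apply ℝ (b i)).comp_left (inner_zero_right (b i)))
  simp_rw [divergence_eq_sum_inner b, integral_finsetSum _ fun i _ => hint i]
  refine sum_eq_zero fun i _ => ?_
  have hparts := integral_bilinear_fderiv_right_eq_neg_left_of_integrable
    (f := fun _ => b i) (g := W) (v := b i) (B := innerSL ℝ) (μ := μ) (by simp) (hint i)
    ((hW.continuous.integrable_of_hasCompactSupport hc).const_inner (b i))
    (fun x _ => differentiableAt_const _) (fun x _ => hW.differentiable one_ne_zero x)
  simp only [fderiv_fun_const, Pi.zero_apply, zero_apply, map_zero, integral_zero,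
    neg_zero] at hparts
  exact hparts

end Divergence

section Multipolar
variable {N n : ℕ} {a : Fin n → EuclideanSpace ℝ (Fin N)} {u : EuclideanSpace ℝ (Fin N) → ℝ}
  {α : ℝ}

theorem mpV_eq_of_notMem_range {x : EuclideanSpace ℝ (Fin N)} (hx : x ∉ Set.range a) :
    mpV a x = n * ∑ i, (‖x - a i‖ ^ 2)⁻¹ - ‖multipoleField a x‖ ^ 2 := by
  have hne : ∀ i, x ≠ a i := fun i h => hx ⟨i, h.symm⟩
  have hnorm : ∀ i, ‖(‖x - a i‖ ^ 2)⁻¹ • (x - a i)‖ ^ 2 = (‖x - a i‖ ^ 2)⁻¹ := fun i => by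
    have : ‖x - a i‖ ≠ 0 := norm_ne_zero_iff.2 (sub_ne_zero.2 (hne i))
    rw [norm_smul, mul_pow, norm_inv, norm_pow, norm_norm]
    field_simp
  rw [mpV, ← sum_congr rfl fun p _ => norm_inv_sq_smul_sub_sq (hne p.1) (hne p.2),
    sum_filter_fst_lt_norm_sub_sq fun i => (‖x - a i‖ ^ 2)⁻¹ • (x - a i)]
  simp [hnorm, multipoleField]

theorem continuousOn_mpV (a : Fin n → EuclideanSpace ℝ (Fin N)) :
    ContinuousOn (mpV a) (Set.range a)ᶜ := by
  refine continuousOn_finsetSum _ fun p _ => continuousOn_const.div (by fun_prop) fun x hx => ?_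
  have hne : ∀ i, ‖x - a i‖ ≠ 0 := fun i =>
    norm_ne_zero_iff.2 (sub_ne_zero.2 fun h => hx ⟨i, h.symm⟩)
  exact mul_ne_zero (pow_ne_zero 2 (hne p.1)) (pow_ne_zero 2 (hne p.2))

theorem continuous_mpV_mul_sq (hu : Continuous u) (hU : tsupport u ⊆ (Set.range a)ᶜ) :
    Continuous fun x => mpV a x * u x ^ 2 :=
  ((continuousOn_mpV a).mul (hu.pow 2).continuousOn).continuous_of_tsupport_subset
    (Set.finite_range a).isClosed.isOpen_compl
    ((tsupport_mul_subset_right (f := mpV a)).trans ((tsupport_sq_subset u).trans hU))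

theorem contDiff_sq_smul_multipoleField (hu : ContDiff ℝ 1 u)
    (hU : tsupport u ⊆ (Set.range a)ᶜ) : ContDiff ℝ 1 fun y => u y ^ 2 • multipoleField a y :=
  (hu.pow 2).smul_of_tsupport_subset (contDiffOn_multipoleField a)
    (Set.finite_range a).isClosed.isOpen_compl ((tsupport_sq_subset u).trans hU)

theorem norm_gradient_mul_prod_rpow_sq_mul_eq {x : EuclideanSpace ℝ (Fin N)}
    (hu : DifferentiableAt ℝ u x) (hx : x ∉ Set.range a) (hα : α * n = N - 2) :
    ‖gradient (fun y => u y * ∏ i, ‖y - a i‖ ^ α) x‖ ^ 2 * ∏ i, ‖x - a i‖ ^ (-(2 * α))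
      = ‖gradient u x‖ ^ 2 - α ^ 2 * (mpV a x * u x ^ 2)
        + α * divergence (fun y => u y ^ 2 • multipoleField a y) x := by
  have hgrad : ‖gradient (fun y => u y * ∏ i, ‖y - a i‖ ^ α) x‖ ^ 2 * ∏ i, ‖x - a i‖ ^ (-(2 * α))
      = ‖gradient u x + (α * u x) • multipoleField a x‖ ^ 2 := by
    rw [(hu.hasGradientAt.mul (hasGradientAt_prod_norm_sub_rpow α hx)).gradient,
      prod_rpow_neg_two_mul (fun i => norm_nonneg _)]
    have hE := prod_norm_sub_rpow_pos hx α
    generalize ∏ i, ‖x - a i‖ ^ α = E at hE ⊢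
    rw [show u x • (α * E) • multipoleField a x + E • gradient u x
        = E • (gradient u x + (α * u x) • multipoleField a x) by module,
      norm_smul, mul_pow, Real.norm_of_nonneg hE.le]
    field_simp
  have hdiv : divergence (fun y => u y ^ 2 • multipoleField a y) x
      = u x ^ 2 * ((N - 2) * ∑ i, (‖x - a i‖ ^ 2)⁻¹)
        + 2 * u x * ⟪gradient u x, multipoleField a x⟫_ℝ := by
    have hG := ((contDiffOn_multipoleField a (k := 1)).differentiableOn one_ne_zero x
      hx).differentiableAt ((Set.finite_range a).isClosed.isOpen_compl.mem_nhds hx)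
    rw [(hasGradientAt_iff_hasFDerivAt.1 hu.hasGradientAt |>.pow 2).divergence_smul
      hG.hasFDerivAt, ← hG.hasFDerivAt.divergence_eq, divergence_multipoleField hx,
      finrank_euclideanSpace_fin]
    simp
  rw [hgrad, hdiv, mpV_eq_of_notMem_range hx, norm_add_sq_real, inner_smul_right, norm_smul, mul_pow,
    Real.norm_eq_abs, sq_abs]
  linear_combination (α * u x ^ 2 * ∑ i, (‖x - a i‖ ^ 2)⁻¹) * hα

theorem norm_gradient_mul_prod_rpow_sq_mul_eq_of_tsupport_subset (hu : Differentiable ℝ u)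
    (hU : tsupport u ⊆ (Set.range a)ᶜ) (hα : α * n = N - 2) :
    (fun x => ‖gradient (fun y => u y * ∏ i, ‖y - a i‖ ^ α) x‖ ^ 2 * ∏ i, ‖x - a i‖ ^ (-(2 * α)))
      = fun x => ‖gradient u x‖ ^ 2 - α ^ 2 * (mpV a x * u x ^ 2)
        + α * divergence (fun y => u y ^ 2 • multipoleField a y) x := by
  ext x
  by_cases hx : x ∈ tsupport u
  · exact norm_gradient_mul_prod_rpow_sq_mul_eq (hu x) (hU hx) hα
  have hv : x ∉ tsupport fun y => u y * ∏ i, ‖y - a i‖ ^ α :=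
    fun h => hx (tsupport_mul_subset_left h)
  have hW : x ∉ tsupport fun y => u y ^ 2 • multipoleField a y :=
    fun h => hx (tsupport_sq_subset u (tsupport_smul_subset_left _ _ h))
  simp [gradient_of_notMem_tsupport hx, gradient_of_notMem_tsupport hv,
    image_eq_zero_of_notMem_tsupport hx, divergence, fderiv_of_notMem_tsupport ℝ hW]

theorem continuous_norm_gradient_mul_prod_rpow_sq_mul (hu : ContDiff ℝ 1 u)
    (hU : tsupport u ⊆ (Set.range a)ᶜ) (hα : α * n = N - 2) :
    Continuous fun x =>
      ‖gradient (fun y => u y * ∏ i, ‖y - a i‖ ^ α) x‖ ^ 2 * ∏ i, ‖x - a i‖ ^ (-(2 * α)) := by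
  rw [norm_gradient_mul_prod_rpow_sq_mul_eq_of_tsupport_subset (hu.differentiable one_ne_zero)
    hU hα]
  exact (hu.continuous_gradient.norm.pow 2 |>.sub ((continuous_mpV_mul_sq hu.continuous hU
    ).const_mul _)).add ((contDiff_sq_smul_multipoleField hu hU).continuous_divergence.const_mul _)

theorem integral_norm_gradient_sq_sub_mpV_eq (hu : ContDiff ℝ 1 u) (hcs : HasCompactSupport u)
    (hU : tsupport u ⊆ (Set.range a)ᶜ) (hα : α * n = N - 2) :
    (∫ x, ‖gradient u x‖ ^ 2) - α ^ 2 * ∫ x, mpV a x * u x ^ 2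
      = ∫ x, ‖gradient (fun y => u y * ∏ i, ‖y - a i‖ ^ α) x‖ ^ 2
          * ∏ i, ‖x - a i‖ ^ (-(2 * α)) := by
  have hW := contDiff_sq_smul_multipoleField hu hU
  have hWc : HasCompactSupport fun y => u y ^ 2 • multipoleField a y :=
    (hcs.comp_left (g := fun t : ℝ => t ^ 2) (by simp)).smul_right
  have hA : Integrable fun x => ‖gradient u x‖ ^ 2 :=
    (hu.continuous_gradient.norm.pow 2).integrable_of_hasCompactSupport
      (HasCompactSupport.intro hcs fun x hx => by simp [gradient_of_notMem_tsupport hx])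
  have hB : Integrable fun x => mpV a x * u x ^ 2 :=
    (continuous_mpV_mul_sq hu.continuous hU).integrable_of_hasCompactSupport
      (HasCompactSupport.intro hcs fun x hx => by simp [image_eq_zero_of_notMem_tsupport hx])
  have hD := hW.continuous_divergence.integrable_of_hasCompactSupport (μ := volume) hWc.divergence
  rw [norm_gradient_mul_prod_rpow_sq_mul_eq_of_tsupport_subset (hu.differentiable one_ne_zero)
      hU hα,
    integral_add (f := fun x => ‖gradient u x‖ ^ 2 - α ^ 2 * (mpV a x * u x ^ 2))
      (hA.sub (hB.const_mul _)) (hD.const_mul _),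
    integral_sub hA (hB.const_mul _), integral_const_mul, integral_const_mul,
    integral_divergence_eq_zero volume hW hWc, mul_zero, add_zero]

theorem exists_norm_gradient_mul_prod_rpow_sq_mul_ne_zero [Nonempty (Fin N)]
    (hu : ContDiff ℝ 1 u) (hcs : HasCompactSupport u) (hU : tsupport u ⊆ (Set.range a)ᶜ)
    (hu0 : u ≠ 0) :
    ∃ x, ‖gradient (fun y => u y * ∏ i, ‖y - a i‖ ^ α) x‖ ^ 2
      * ∏ i, ‖x - a i‖ ^ (-(2 * α)) ≠ 0 := by
  set v := fun y => u y * ∏ i, ‖y - a i‖ ^ α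
  by_contra! hC
  have hv : ContDiff ℝ 1 v := hu.smul_of_tsupport_subset (contDiffOn_prod_norm_sub_rpow a α)
    (Set.finite_range a).isClosed.isOpen_compl hU
  have hfderiv : ∀ x, fderiv ℝ v x = 0 := fun x => by
    by_cases hx : x ∈ Set.range a
    · exact fderiv_of_notMem_tsupport ℝ fun h => hU (tsupport_mul_subset_left h) hx
    · have := hC x
      rw [mul_eq_zero, or_iff_left (prod_norm_sub_rpow_pos hx _).ne', sq_eq_zero_iff,
        norm_eq_zero] at this
      rw [← toDual_gradient, this, map_zero]
  have hv0 := hcs.mul_right.eq_zero_of_fderiv_eq_zero (hv.differentiable one_ne_zero) hfderiv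
  refine hu0 (funext fun x => ?_)
  by_cases hx : x ∈ Set.range a
  · exact image_eq_zero_of_notMem_tsupport fun h => hU h hx
  · simpa [(prod_norm_sub_rpow_pos hx α).ne'] using congrFun hv0 x

end Multipolar

theorem stmt11_general (N n : ℕ) (hN : 3 ≤ N) (hn : 2 ≤ n)
    (Ω : Set (EuclideanSpace ℝ (Fin N)))
    (a : Fin n → EuclideanSpace ℝ (Fin N)) :
    ∀ u : EuclideanSpace ℝ (Fin N) → ℝ, ContDiff ℝ 1 u → HasCompactSupport u →
      tsupport u ⊆ Ω \ Set.range a →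
      ((∫ x in Ω, ‖gradient u x‖ ^ 2) -
          ((N : ℝ) - 2) ^ 2 / (n : ℝ) ^ 2 * ∫ x in Ω, mpV a x * u x ^ 2
        = ∫ x in Ω,
            ‖gradient (fun y => u y * ∏ i, ‖y - a i‖ ^ (((N : ℝ) - 2) / (n : ℝ))) x‖ ^ 2 *
              ∏ i, ‖x - a i‖ ^ (-(2 * ((N : ℝ) - 2) / (n : ℝ)))) ∧
      (0 ≤ (∫ x in Ω, ‖gradient u x‖ ^ 2) -
          ((N : ℝ) - 2) ^ 2 / (n : ℝ) ^ 2 * ∫ x in Ω, mpV a x * u x ^ 2) ∧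
      (u ≠ 0 →
        0 < (∫ x in Ω, ‖gradient u x‖ ^ 2) -
          ((N : ℝ) - 2) ^ 2 / (n : ℝ) ^ 2 * ∫ x in Ω, mpV a x * u x ^ 2) := by
  intro u hu hcs hsupp
  rw [← div_pow, mul_div_assoc]
  set α : ℝ := ((N : ℝ) - 2) / n
  have hα : α * n = N - 2 := div_mul_cancel₀ _ (by positivity)
  have hU : tsupport u ⊆ (Set.range a)ᶜ := fun x hx => (hsupp hx).2
  have hΩ : ∀ f : EuclideanSpace ℝ (Fin N) → ℝ, (∀ x ∉ tsupport u, f x = 0) →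
      ∫ x in Ω, f x = ∫ x, f x := fun f hf =>
    setIntegral_eq_integral_of_forall_compl_eq_zero fun x hx => hf x fun h => hx (hsupp h).1
  have hC0 : ∀ x ∉ tsupport u, ‖gradient (fun y => u y * ∏ i, ‖y - a i‖ ^ α) x‖ ^ 2
      * ∏ i, ‖x - a i‖ ^ (-(2 * α)) = 0 := fun x hx => by
    simp [gradient_of_notMem_tsupport fun h => hx (tsupport_mul_subset_left h)]
  have key := integral_norm_gradient_sq_sub_mpV_eq hu hcs hU hα
  rw [← hΩ _ fun x hx => by simp [gradient_of_notMem_tsupport hx],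
    ← hΩ _ fun x hx => by simp [image_eq_zero_of_notMem_tsupport hx], ← hΩ _ hC0] at key
  refine ⟨key, key ▸ integral_nonneg fun x => by positivity, fun hu0 => ?_⟩
  have : Nonempty (Fin N) := ⟨⟨0, by omega⟩⟩
  obtain ⟨x₀, hx₀⟩ := exists_norm_gradient_mul_prod_rpow_sq_mul_ne_zero (α := α) hu hcs hU hu0
  rw [key, hΩ _ hC0]
  exact (continuous_norm_gradient_mul_prod_rpow_sq_mul hu hU hα
    ).integral_pos_of_hasCompactSupport_nonneg_nonzero (HasCompactSupport.intro hcs hC0)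
    (fun x => by positivity) hx₀

theorem stmt11 (N n : ℕ) (hN : 3 ≤ N) (hn : 2 ≤ n)
    (Ω : Set (EuclideanSpace ℝ (Fin N))) (hΩo : IsOpen Ω)
    (a : Fin n → EuclideanSpace ℝ (Fin N)) (ha : ∀ i, a i ∈ Ω) (hinj : Function.Injective a) :
    ∀ u : EuclideanSpace ℝ (Fin N) → ℝ, ContDiff ℝ 1 u → HasCompactSupport u →
      tsupport u ⊆ Ω \ Set.range a →
      ((∫ x in Ω, ‖gradient u x‖ ^ 2) -
          ((N : ℝ) - 2) ^ 2 / (n : ℝ) ^ 2 * ∫ x in Ω, mpV a x * u x ^ 2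
        = ∫ x in Ω,
            ‖gradient (fun y => u y * ∏ i, ‖y - a i‖ ^ (((N : ℝ) - 2) / (n : ℝ))) x‖ ^ 2 *
              ∏ i, ‖x - a i‖ ^ (-(2 * ((N : ℝ) - 2) / (n : ℝ)))) ∧
      (0 ≤ (∫ x in Ω, ‖gradient u x‖ ^ 2) -
          ((N : ℝ) - 2) ^ 2 / (n : ℝ) ^ 2 * ∫ x in Ω, mpV a x * u x ^ 2) ∧
      (u ≠ 0 →
        0 < (∫ x in Ω, ‖gradient u x‖ ^ 2) -
          ((N : ℝ) - 2) ^ 2 / (n : ℝ) ^ 2 * ∫ x in Ω, mpV a x * u x ^ 2) :=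
  stmt11_general N n hN hn Ω a
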